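/- arXiv:1408.1521 — 4 statements merged into one kernel-verified Lean document; each statement's English description precedes it below -/
import Mathlib

section
/- Let S_V be a set of elements of the free group F on countably many generators, and let V be the class of groups satisfying all identities w = 1 for w ∈ S_V. Assume V is nontrivial (it contains a group with more than one element) and that there is a group D ∈ V generated by m elements which discriminates the relatively free group of V, in the sense that for every finite set W of elements of F such that no w ∈ W is an identity of all groups in V, there exists a homomorphism F → D sending every w ∈ W to a nontrivial element. Then for every set S_U of elements of F (defining a variety U), there exists a group H₀ generated by m + 1 elements with H₀ ∈ UV (i.e., H₀ has a normal subgroup satisfying all identities of S_U with quotient satisfying all identities of S_V) such that for every finite set W of elements of F in which no w is an identity of all groups in UV, there is a homomorphism F → H₀ sending every w ∈ W to a nontrivial element. In particular, the basis rank of the product UV is at most m + 1. -/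
/-- A group `G` satisfies all the identities `w = 1` for `w ∈ S`. -/
def Sat (S : Set (FreeGroup ℕ)) (G : Type*) [Group G] : Prop :=
  ∀ w ∈ S, ∀ φ : FreeGroup ℕ →* G, φ w = 1

/-- `G` is generated by at most `d` elements. -/
def GeneratedBy (d : ℕ) (G : Type*) [Group G] : Prop :=
  ∃ s : Finset G, s.card ≤ d ∧ Subgroup.closure (s : Set G) = ⊤

/-- `G` belongs to the product variety `U·V`, where `U` and `V` are the varieties
defined by the sets of words `SU` and `SV`. -/
def MemProd (SU SV : Set (FreeGroup ℕ)) (G : Type*) [Group G] : Prop :=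
  ∃ N : Subgroup G, ∃ hN : N.Normal,
    Sat SU N ∧ (haveI := hN; Sat SV (G ⧸ N))

/-- `w` is an identity of all groups of the variety defined by the set of words `S`. -/
def IsIdOf (S : Set (FreeGroup ℕ)) (w : FreeGroup ℕ) : Prop :=
  ∀ (H : Type) [Group H], Sat S H → ∀ φ : FreeGroup ℕ →* H, φ w = 1

/-- `w` is an identity of all groups of the product variety `U·V`. -/
def IsIdOfProd (SU SV : Set (FreeGroup ℕ)) (w : FreeGroup ℕ) : Prop :=
  ∀ (H : Type) [Group H], MemProd SU SV H → ∀ φ : FreeGroup ℕ →* H, φ w = 1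

/-!
Let `A` be the relatively free `U`-group on the set `D`. Every subgroup of the unrestricted
wreath product `A ≀ᵣ D` lies in `UV`, and if `S` generates `D` with `|S| ≤ m`, the subgroup `H₀`
generated by `S` and the base element `b : d ↦ a_d` is `(m + 1)`-generated. Given `η : F → D`
and `s : ℕ → D`, the assignment `x_n ↦ (b (s n * ·), η x_n)` is a homomorphism `F → H₀`, and
the base coordinate at `1` of the image of a reduced word `w` is the product of the generators
`a_{s n η(r)⁻¹}^{±1}` over the edges `(r, r x_n)` of the path of `w` in the Cayley graph.

Let `ψ : F → H` with `N ⊴ H`, `N ∈ U`, `H / N ∈ V` and `ψ w ≠ 1`. Discrimination of `F(V)` by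
`D` yields `η` with `η w ≠ 1` unless `ψ w ∈ N`, and which identifies two prefixes of `w` only if
`ψ` does modulo `N`. Since `D` is infinite, `s` can be chosen so that the translates
`s n η(r)⁻¹` for distinct letters `n` never meet. The index `s n η(r)⁻¹` then determines `n` and
`ψ(r) N`, so sending `a_{s n η(r)⁻¹}` to the Schreier element `t(ψ(r) N) ψ(x_n) t(ψ(r x_n) N)⁻¹`
of a transversal `t` extends, as `N ∈ U`, to a homomorphism `A → N`. Telescoping along `w`
carries the coordinate to `t(N) ψ(w) t(N)⁻¹ ≠ 1`.
-/

open Subgroup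

namespace Sat

variable {S : Set (FreeGroup ℕ)}

theorem of_injective {G H : Type*} [Group G] [Group H] (hG : Sat S G) (e : H →* G)
    (he : Function.Injective e) : Sat S H :=
  fun w hw φ => he <| by rw [_root_.map_one, ← MonoidHom.comp_apply, hG w hw]

theorem pi {ι : Type*} {G : ι → Type*} [∀ i, Group (G i)] (h : ∀ i, Sat S (G i)) :
    Sat S (∀ i, G i) :=
  fun w hw φ => funext fun i => h i w hw ((Pi.evalMonoidHom G i).comp φ)

end Sat

theorem not_isIdOf_of_apply_ne_one {S : Set (FreeGroup ℕ)} {G : Type} [Group G] (hG : Sat S G)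
    (φ : FreeGroup ℕ →* G) {w : FreeGroup ℕ} (hw : φ w ≠ 1) : ¬ IsIdOf S w :=
  fun h => hw (h G hG φ)

section MemProd

variable {SU SV : Set (FreeGroup ℕ)}

theorem memProd_of_ker {G Q : Type*} [Group G] [Group Q] (f : G →* Q) (hU : Sat SU f.ker)
    (hV : Sat SV Q) : MemProd SU SV G :=
  ⟨f.ker, inferInstance, hU, hV.of_injective _ (QuotientGroup.kerLift_injective f)⟩

theorem MemProd.of_injective {G K : Type*} [Group G] [Group K] (hG : MemProd SU SV G)
    (e : K →* G) (he : Function.Injective e) : MemProd SU SV K := by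
  obtain ⟨N, _, hU, hV⟩ := hG
  refine memProd_of_ker ((QuotientGroup.mk' N).comp e) ?_ hV
  rw [← MonoidHom.comap_ker, QuotientGroup.ker_mk']
  exact hU.of_injective (e.subgroupComap N) fun x y h => Subtype.ext (he congr($h.1))

theorem memProd_regularWreathProduct {A D : Type*} [Group A] [Group D] (hA : Sat SU A)
    (hD : Sat SV D) : MemProd SU SV (A ≀ᵣ D) := by
  refine memProd_of_ker RegularWreathProduct.rightHom ?_ hD
  have right_eq_one (x : (RegularWreathProduct.rightHom : A ≀ᵣ D →* D).ker) :
      (x : A ≀ᵣ D).right = 1 := x.2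
  let base : (RegularWreathProduct.rightHom : A ≀ᵣ D →* D).ker →* (D → A) :=
    { toFun := fun x => (x : A ≀ᵣ D).left
      map_one' := rfl
      map_mul' := fun x y => by
        ext d
        simp [RegularWreathProduct.mul_def, right_eq_one x] }
  refine (Sat.pi fun _ => hA).of_injective base fun x y h => ?_
  exact Subtype.ext (RegularWreathProduct.ext h ((right_eq_one x).trans (right_eq_one y).symm))

end MemProd

def verbalSubgroup (S : Set (FreeGroup ℕ)) (X : Type*) : Subgroup (FreeGroup X) :=
  normalClosure {x | ∃ u ∈ S, ∃ φ : FreeGroup ℕ →* FreeGroup X, φ u = x}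

instance (S : Set (FreeGroup ℕ)) (X : Type*) : (verbalSubgroup S X).Normal :=
  normalClosure_normal

abbrev RelativelyFreeGroup (S : Set (FreeGroup ℕ)) (X : Type*) : Type _ :=
  FreeGroup X ⧸ verbalSubgroup S X

namespace RelativelyFreeGroup

variable {S : Set (FreeGroup ℕ)} {X : Type*}

def of (x : X) : RelativelyFreeGroup S X := QuotientGroup.mk (FreeGroup.of x)

theorem sat : Sat S (RelativelyFreeGroup S X) := by
  intro u hu ψ
  let e : FreeGroup ℕ →* FreeGroup X := FreeGroup.lift fun n => (ψ (FreeGroup.of n)).out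
  have he : (QuotientGroup.mk' _).comp e = ψ := FreeGroup.ext_hom _ _ fun n => by
    simp [e]
  rw [← he, MonoidHom.comp_apply, QuotientGroup.mk'_apply, QuotientGroup.eq_one_iff]
  exact subset_normalClosure ⟨u, hu, e, rfl⟩

def lift {N : Type*} [Group N] (hN : Sat S N) (ν : X → N) : RelativelyFreeGroup S X →* N :=
  QuotientGroup.lift _ (FreeGroup.lift ν) <| normalClosure_le_normal <| by
    rintro _ ⟨u, hu, φ, rfl⟩
    exact hN u hu ((FreeGroup.lift ν).comp φ)

theorem lift_of {N : Type*} [Group N] (hN : Sat S N) (ν : X → N) (x : X) :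
    lift hN ν (of x) = ν x :=
  QuotientGroup.lift_mk .. |>.trans FreeGroup.lift_apply_of

end RelativelyFreeGroup

theorem generatedBy_closure {G : Type*} [Group G] (k : Finset G) {d : ℕ} (hk : k.card ≤ d) :
    GeneratedBy d (closure (k : Set G)) := by
  classical
  refine ⟨k.subtype (· ∈ closure (k : Set G)), ?_, ?_⟩
  · exact (Finset.card_subtype _ _).trans_le ((Finset.card_filter_le _ _).trans hk)
  · convert closure_closure_coe_preimage (k := (k : Set G))
    ext x
    simp

theorem infinite_of_discriminates {SV : Set (FreeGroup ℕ)} {D : Type} [Group D]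
    (hV : ∃ (G : Type) (hG : Group G), haveI := hG; Sat SV G ∧ Nontrivial G)
    (hdisc : ∀ W : Finset (FreeGroup ℕ), (∀ w ∈ W, ¬ IsIdOf SV w) →
      ∃ η : FreeGroup ℕ →* D, ∀ w ∈ W, η w ≠ 1) : Infinite D := by
  classical
  obtain ⟨G, _, hG, _⟩ := hV
  obtain ⟨g, hg⟩ := exists_ne (1 : G)
  have hnid (i j : ℕ) (hij : i ≠ j) : ¬ IsIdOf SV (FreeGroup.of i * (FreeGroup.of j)⁻¹) :=
    not_isIdOf_of_apply_ne_one hG (FreeGroup.lift (Pi.mulSingle i g)) <| by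
      simpa [Pi.mulSingle_eq_of_ne hij.symm] using hg
  by_contra hfin
  rw [not_infinite_iff_finite] at hfin
  let n := Nat.card D + 1
  let W := ((Finset.univ : Finset (Fin n × Fin n)).filter fun p => p.1 ≠ p.2).image
    fun p => FreeGroup.of (p.1 : ℕ) * (FreeGroup.of (p.2 : ℕ))⁻¹
  obtain ⟨η, hη⟩ := hdisc W <| by
    simp only [W, Finset.mem_image, Finset.mem_filter]
    rintro _ ⟨⟨i, j⟩, ⟨-, hij⟩, rfl⟩
    exact hnid i j (Fin.val_ne_of_ne hij)
  have hinj : Function.Injective fun i : Fin n => η (FreeGroup.of (i : ℕ)) := by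
    intro i j hij
    by_contra hne
    refine hη _ (Finset.mem_image.2 ⟨(i, j), by simpa using hne, rfl⟩) ?_
    rw [map_mul, map_inv]
    exact mul_inv_eq_one.2 hij
  have := Nat.card_le_card_of_injective _ hinj
  simp [n] at this

open scoped Pointwise in
theorem exists_disjoint_translates {G : Type*} [Group G] [Infinite G] (R : Finset G)
    (K : Finset ℕ) : ∃ s : ℕ → G,
      ∀ n ∈ K, ∀ n' ∈ K, ∀ y ∈ R, ∀ y' ∈ R, s n * y = s n' * y' → n = n' := by
  classical
  induction K using Finset.induction_on with
  | empty => exact ⟨1, by simp⟩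
  | insert k K hk ih =>
    obtain ⟨s, hs⟩ := ih
    obtain ⟨z, hz⟩ := Infinite.exists_notMem_finset (K.biUnion fun n => s n • (R * R⁻¹))
    have hzK : ∀ n ∈ K, ∀ y ∈ R, ∀ y' ∈ R, z * y ≠ s n * y' := by
      intro n hn y hy y' hy' h
      refine hz (Finset.mem_biUnion.2 ⟨n, hn, Finset.mem_smul_finset.2
        ⟨y' * y⁻¹, Finset.mul_mem_mul hy' (Finset.inv_mem_inv hy), ?_⟩⟩)
      rw [smul_eq_mul, ← mul_assoc, ← h, mul_inv_cancel_right]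
    have hne {n} (hn : n ∈ K) : n ≠ k := fun h => hk (h ▸ hn)
    refine ⟨Function.update s k z, ?_⟩
    intro n hn n' hn' y hy y' hy' h
    rcases Finset.mem_insert.1 hn with rfl | hnK <;>
      rcases Finset.mem_insert.1 hn' with rfl | hn'K
    · rfl
    · rw [Function.update_self, Function.update_of_ne (hne hn'K)] at h
      exact (hzK _ hn'K _ hy _ hy' h).elim
    · rw [Function.update_self, Function.update_of_ne (hne hnK)] at h
      exact (hzK _ hnK _ hy' _ hy h.symm).elim
    · rw [Function.update_of_ne (hne hnK), Function.update_of_ne (hne hn'K)] at h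
      exact hs n hnK n' hn'K y hy y' hy' h

theorem FreeGroup.mk_cons {α : Type*} (a : α × Bool) (ℓ : List (α × Bool)) :
    FreeGroup.mk (a :: ℓ) = FreeGroup.mk [a] * FreeGroup.mk ℓ :=
  (FreeGroup.mul_mk (L₁ := [a])).symm

/-- The path of `u * mk ℓ` starting at `u`: an edge `(r, n)` joins `r` and `r * of n`, traversed
forwards for a letter `x_n` and backwards for a letter `x_n⁻¹`. -/
def edgesFrom : FreeGroup ℕ → List (ℕ × Bool) → List (FreeGroup ℕ × ℕ)
  | _, [] => []
  | u, (n, true) :: ℓ => (u, n) :: edgesFrom (u * FreeGroup.of n) ℓ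
  | u, (n, false) :: ℓ =>
    (u * (FreeGroup.of n)⁻¹, n) :: edgesFrom (u * (FreeGroup.of n)⁻¹) ℓ

def edges (w : FreeGroup ℕ) : Finset (FreeGroup ℕ × ℕ) := (edgesFrom 1 w.toWord).toFinset

section Telescoping

variable {M : Type*} [Group M] {f g : FreeGroup ℕ → M}

theorem apply_mul_mk_eq_of_forall_mem_edgesFrom (ℓ : List (ℕ × Bool)) (u : FreeGroup ℕ)
    (hu : f u = g u)
    (hstep : ∀ e ∈ edgesFrom u ℓ, (f e.1)⁻¹ * f (e.1 * FreeGroup.of e.2) =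
      (g e.1)⁻¹ * g (e.1 * FreeGroup.of e.2)) :
    f (u * FreeGroup.mk ℓ) = g (u * FreeGroup.mk ℓ) := by
  induction ℓ generalizing u with
  | nil => rwa [← FreeGroup.one_eq_mk, mul_one]
  | cons a ℓ ih =>
    obtain ⟨n, _ | _⟩ := a
    · have hr : f (u * (FreeGroup.of n)⁻¹) = g (u * (FreeGroup.of n)⁻¹) := by
        have := hstep _ List.mem_cons_self
        rw [inv_mul_cancel_right, hu] at this
        exact inv_injective (mul_right_cancel this)
      have hmk : FreeGroup.mk [(n, false)] = (FreeGroup.of n)⁻¹ := rfl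
      rw [FreeGroup.mk_cons, hmk, ← mul_assoc]
      exact ih _ hr fun e he => hstep e (List.mem_cons_of_mem _ he)
    · have hr : f (u * FreeGroup.of n) = g (u * FreeGroup.of n) := by
        have := hstep _ List.mem_cons_self
        rw [hu] at this
        exact mul_left_cancel this
      rw [FreeGroup.mk_cons, ← mul_assoc]
      exact ih _ hr fun e he => hstep e (List.mem_cons_of_mem _ he)

theorem apply_eq_of_forall_mem_edges (w : FreeGroup ℕ) (h1 : f 1 = g 1)
    (hstep : ∀ e ∈ edges w, (f e.1)⁻¹ * f (e.1 * FreeGroup.of e.2) =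
      (g e.1)⁻¹ * g (e.1 * FreeGroup.of e.2)) : f w = g w := by
  simpa [FreeGroup.mk_toWord] using
    apply_mul_mk_eq_of_forall_mem_edgesFrom w.toWord 1 h1 fun e he =>
      hstep e (List.mem_toFinset.2 he)

end Telescoping

section WreathHom

variable {A D : Type*} [Group A] [Group D] (b : D → A) (s : ℕ → D) (η : FreeGroup ℕ →* D)

def wreathHom : FreeGroup ℕ →* A ≀ᵣ D :=
  FreeGroup.lift fun n => ⟨fun x => b (s n * x), η (FreeGroup.of n)⟩

theorem wreathHom_right (u : FreeGroup ℕ) : (wreathHom b s η u).right = η u := by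
  have : (RegularWreathProduct.rightHom : A ≀ᵣ D →* D).comp (wreathHom b s η) = η :=
    FreeGroup.ext_hom _ _ fun n => by simp [wreathHom]
  exact DFunLike.congr_fun this u

theorem wreathHom_mul_of_left_one (u : FreeGroup ℕ) (n : ℕ) :
    (wreathHom b s η (u * FreeGroup.of n)).left 1 =
      (wreathHom b s η u).left 1 * b (s n * (η u)⁻¹) := by
  rw [map_mul, RegularWreathProduct.mul_left, wreathHom_right]
  simp [wreathHom]

theorem range_wreathHom_le {S : Set D} (hS : closure S = ⊤) :
    (wreathHom b s η).range ≤ closure (insert ⟨b, 1⟩ (RegularWreathProduct.inl '' S)) := by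
  have hinl (d : D) :
      RegularWreathProduct.inl d ∈ closure (insert ⟨b, 1⟩ (RegularWreathProduct.inl '' S)) := by
    have := mem_map_of_mem (RegularWreathProduct.inl : D →* A ≀ᵣ D) (hS ▸ mem_top d : d ∈ closure S)
    rw [MonoidHom.map_closure] at this
    exact closure_mono (Set.subset_insert _ _) this
  rw [wreathHom, FreeGroup.range_lift_eq_closure, closure_le]
  rintro _ ⟨n, rfl⟩
  dsimp only
  have : (⟨fun x => b (s n * x), η (FreeGroup.of n)⟩ : A ≀ᵣ D) =
      RegularWreathProduct.inl (s n)⁻¹ * ⟨b, 1⟩ * RegularWreathProduct.inl (s n) *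
        RegularWreathProduct.inl (η (FreeGroup.of n)) := by
    ext <;> simp [RegularWreathProduct.mul_def]
  rw [this]
  exact mul_mem (mul_mem (mul_mem (hinl _) (subset_closure (Set.mem_insert _ _))) (hinl _))
    (hinl _)

end WreathHom

section Schreier

variable {H : Type*} [Group H] (N : Subgroup H) [N.Normal]

noncomputable def schreierElement (q : H ⧸ N) (x : H) : H := q.out * x * (q * x).out⁻¹

theorem schreierElement_mem (q : H ⧸ N) (x : H) : schreierElement N q x ∈ N := by
  rw [← QuotientGroup.eq_one_iff, schreierElement]
  simp

theorem inv_mul_transversal_mul (h x : H) :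
    ((1 : H ⧸ N).out * h * (h : H ⧸ N).out⁻¹)⁻¹ *
      ((1 : H ⧸ N).out * (h * x) * ((h * x : H) : H ⧸ N).out⁻¹) = schreierElement N h x := by
  rw [schreierElement, QuotientGroup.mk_mul]
  group

end Schreier

def testWords (w : FreeGroup ℕ) : Finset (FreeGroup ℕ) :=
  insert w ((edges w ×ˢ edges w).image fun p => p.1.1 * p.2.1⁻¹)

theorem wreathHom_ne_one {SU : Set (FreeGroup ℕ)} {D : Type*} [Group D] (s : ℕ → D)
    (η : FreeGroup ℕ →* D) {H : Type*} [Group H] {N : Subgroup H} [N.Normal] (hN : Sat SU N)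
    (ψ : FreeGroup ℕ →* H) {w : FreeGroup ℕ} (hw : ψ w ≠ 1)
    (hη : ∀ u ∈ testWords w, η u = 1 → (ψ u : H ⧸ N) = 1)
    (hs : ∀ e ∈ edges w, ∀ e' ∈ edges w, s e.2 * (η e.1)⁻¹ = s e'.2 * (η e'.1)⁻¹ → e.2 = e'.2) :
    wreathHom (RelativelyFreeGroup.of (S := SU)) s η w ≠ 1 := by
  intro h1
  have hwN : (ψ w : H ⧸ N) = 1 := hη w (Finset.mem_insert_self _ _) <| by
    simpa [wreathHom_right] using congrArg RegularWreathProduct.right h1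
  let key : edges w → D := fun e => s e.1.2 * (η e.1.1)⁻¹
  let val : edges w → N := fun e =>
    ⟨schreierElement N (ψ e.1.1) (ψ (FreeGroup.of e.1.2)), schreierElement_mem ..⟩
  have hval : val.FactorsThrough key := by
    intro e e' hkey
    have hn := hs e.1 e.2 e'.1 e'.2 hkey
    have hηe : η (e.1.1 * e'.1.1⁻¹) = 1 := by
      rw [map_mul, map_inv, mul_inv_eq_one]
      simpa [key, hn] using hkey
    have hcoset : (ψ e.1.1 : H ⧸ N) = ψ e'.1.1 := by
      have := hη _ (Finset.mem_insert_of_mem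
        (Finset.mem_image_of_mem _ (Finset.mk_mem_product e.2 e'.2))) hηe
      simpa [mul_inv_eq_one] using this
    simp [val, hn, hcoset]
  let ρ := RelativelyFreeGroup.lift hN (Function.extend key val 1)
  have hρ (e : edges w) : ρ (RelativelyFreeGroup.of (key e)) = val e := by
    rw [RelativelyFreeGroup.lift_of, hval.extend_apply]
  have := apply_eq_of_forall_mem_edges
    (f := fun u => (ρ ((wreathHom RelativelyFreeGroup.of s η u).left 1) : H))
    (g := fun u => (1 : H ⧸ N).out * ψ u * (ψ u : H ⧸ N).out⁻¹) w (by simp) fun e he => by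
      rw [wreathHom_mul_of_left_one, map_mul ρ, Subgroup.coe_mul, inv_mul_cancel_left, map_mul ψ,
        inv_mul_transversal_mul]
      exact congrArg Subtype.val (hρ ⟨e, he⟩)
  simp only [h1, hwN, RegularWreathProduct.one_left, Pi.one_apply, map_one, OneMemClass.coe_one]
    at this
  exact hw (conj_eq_one_iff.1 this.symm)

theorem exists_hom_discriminating_fintype {SV : Set (FreeGroup ℕ)} {D : Type} [Group D]
    (hdisc : ∀ W : Finset (FreeGroup ℕ), (∀ w ∈ W, ¬ IsIdOf SV w) →
      ∃ η : FreeGroup ℕ →* D, ∀ w ∈ W, η w ≠ 1)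
    {ι : Type*} [Fintype ι] {Q : ι → Type} [∀ i, Group (Q i)] (hQ : ∀ i, Sat SV (Q i))
    (π : ∀ i, FreeGroup ℕ →* Q i) (T : ι → Finset (FreeGroup ℕ)) :
    ∃ η : FreeGroup ℕ →* D, ∀ i, ∀ u ∈ T i, η u = 1 → π i u = 1 := by
  classical
  obtain ⟨η, hη⟩ := hdisc (Finset.univ.biUnion fun i => (T i).filter fun u => π i u ≠ 1) <| by
    simp only [Finset.mem_biUnion, Finset.mem_filter]
    rintro u ⟨i, -, -, hu⟩
    exact not_isIdOf_of_apply_ne_one (hQ i) (π i) hu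
  refine ⟨η, fun i u hu h => by_contra fun hne => hη u ?_ h⟩
  exact Finset.mem_biUnion.2 ⟨i, Finset.mem_univ _, Finset.mem_filter.2 ⟨hu, hne⟩⟩

theorem exists_wreathHom_discriminating {SU SV : Set (FreeGroup ℕ)} {D : Type} [Group D]
    [Infinite D]
    (hdisc : ∀ W : Finset (FreeGroup ℕ), (∀ w ∈ W, ¬ IsIdOf SV w) →
      ∃ η : FreeGroup ℕ →* D, ∀ w ∈ W, η w ≠ 1)
    (W : Finset (FreeGroup ℕ)) (hW : ∀ w ∈ W, ¬ IsIdOfProd SU SV w) :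
    ∃ (s : ℕ → D) (η : FreeGroup ℕ →* D),
      ∀ w ∈ W, wreathHom (RelativelyFreeGroup.of (S := SU)) s η w ≠ 1 := by
  classical
  have (w : W) : ∃ (H : Type) (_ : Group H) (N : Subgroup H) (_ : N.Normal),
      Sat SU N ∧ Sat SV (H ⧸ N) ∧ ∃ ψ : FreeGroup ℕ →* H, ψ w ≠ 1 := by
    have := hW w w.2
    simp only [IsIdOfProd, MemProd, not_forall] at this
    obtain ⟨H, _, ⟨N, _, hU, hV⟩, ψ, hψ⟩ := this
    exact ⟨H, _, N, _, hU, hV, ψ, hψ⟩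
  choose H _ N _ hU hV ψ hψ using this
  obtain ⟨η, hη⟩ := exists_hom_discriminating_fintype hdisc hV
    (fun w => (QuotientGroup.mk' (N w)).comp (ψ w)) fun w => testWords w
  obtain ⟨s, hs⟩ := exists_disjoint_translates
    (W.biUnion fun w => (edges w).image fun e => (η e.1)⁻¹)
    (W.biUnion fun w => (edges w).image Prod.snd)
  refine ⟨s, η, fun w hw => wreathHom_ne_one s η (hU ⟨w, hw⟩) (ψ ⟨w, hw⟩) (hψ ⟨w, hw⟩)
    (hη ⟨w, hw⟩) fun e he e' he' => ?_⟩
  have hmem {α : Type} [DecidableEq α] (f : FreeGroup ℕ × ℕ → α) {e} (he : e ∈ edges w) :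
      f e ∈ W.biUnion fun w => (edges w).image f :=
    Finset.mem_biUnion.2 ⟨w, hw, Finset.mem_image_of_mem f he⟩
  exact hs _ (hmem _ he) _ (hmem _ he') _ (hmem (fun e => (η e.1)⁻¹) he) _
    (hmem (fun e => (η e.1)⁻¹) he')

theorem isIdOfProd_of_discriminating {SU SV : Set (FreeGroup ℕ)} {d : ℕ} {H₀ : Type}
    [Group H₀] (hgen : GeneratedBy d H₀) (hmem : MemProd SU SV H₀)
    (hdisc : ∀ W : Finset (FreeGroup ℕ), (∀ w ∈ W, ¬ IsIdOfProd SU SV w) →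
      ∃ η : FreeGroup ℕ →* H₀, ∀ w ∈ W, η w ≠ 1) {w : FreeGroup ℕ}
    (hw : ∀ (H : Type) [Group H], MemProd SU SV H → GeneratedBy d H →
      ∀ φ : FreeGroup ℕ →* H, φ w = 1) : IsIdOfProd SU SV w := by
  by_contra hnid
  obtain ⟨η, hη⟩ := hdisc {w} (by simpa using hnid)
  exact hη w (Finset.mem_singleton_self w) (hw H₀ hmem hgen η)

/-- If a nontrivial variety `V` has its relatively free group discriminated by an
`m`-generated group `D ∈ V`, then for any variety `U` the relatively free group of the
product `U·V` is discriminated by an `(m+1)`-generated group of `U·V`; in particular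
the basis rank of `U·V` is at most `m + 1`. -/
theorem product_discriminated_by_m_plus_one_generated
    (SV : Set (FreeGroup ℕ))
    (hVnontriv : ∃ (G : Type) (hG : Group G), haveI := hG; Sat SV G ∧ Nontrivial G)
    (m : ℕ) (D : Type) [Group D] (hDV : Sat SV D) (hDgen : GeneratedBy m D)
    (hdisc : ∀ W : Finset (FreeGroup ℕ), (∀ w ∈ W, ¬ IsIdOf SV w) →
      ∃ η : FreeGroup ℕ →* D, ∀ w ∈ W, η w ≠ 1)
    (SU : Set (FreeGroup ℕ)) :
    (∃ (H₀ : Type) (hH : Group H₀), haveI := hH;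
      GeneratedBy (m + 1) H₀ ∧ MemProd SU SV H₀ ∧
        ∀ W : Finset (FreeGroup ℕ), (∀ w ∈ W, ¬ IsIdOfProd SU SV w) →
          ∃ η : FreeGroup ℕ →* H₀, ∀ w ∈ W, η w ≠ 1) ∧
    (∀ w : FreeGroup ℕ,
      (∀ (H : Type) [Group H], MemProd SU SV H → GeneratedBy (m + 1) H →
          ∀ φ : FreeGroup ℕ →* H, φ w = 1) →
      ∀ (K : Type) [Group K], MemProd SU SV K → ∀ ψ : FreeGroup ℕ →* K, ψ w = 1) := by
  classical
  obtain ⟨S, hcard, hS⟩ := hDgen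
  have := infinite_of_discriminates hVnontriv hdisc
  let b : D → RelativelyFreeGroup SU D := RelativelyFreeGroup.of
  let gens : Finset (RelativelyFreeGroup SU D ≀ᵣ D) := insert ⟨b, 1⟩ (S.image .inl)
  let H₀ := Subgroup.closure (gens : Set (RelativelyFreeGroup SU D ≀ᵣ D))
  have hgen : GeneratedBy (m + 1) H₀ := generatedBy_closure gens <|
    (Finset.card_insert_le _ _).trans (Nat.add_le_add_right (Finset.card_image_le.trans hcard) 1)
  have hmem : MemProd SU SV H₀ := (memProd_regularWreathProduct RelativelyFreeGroup.sat hDV)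
    |>.of_injective H₀.subtype H₀.subtype_injective
  have hdisc₀ (W : Finset (FreeGroup ℕ)) (hW : ∀ w ∈ W, ¬ IsIdOfProd SU SV w) :
      ∃ η : FreeGroup ℕ →* H₀, ∀ w ∈ W, η w ≠ 1 := by
    obtain ⟨s, η, hη⟩ := exists_wreathHom_discriminating hdisc W hW
    have hrange : (wreathHom b s η).range ≤ H₀ := by
      simpa [H₀, gens] using range_wreathHom_le b s η hS
    exact ⟨(wreathHom b s η).codRestrict H₀ fun u => hrange ⟨u, rfl⟩,
      fun w hw h => hη w hw congr($h.1)⟩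
  exact ⟨⟨H₀, _, hgen, hmem, hdisc₀⟩,
    fun w hw => isIdOfProd_of_discriminating hgen hmem hdisc₀ hw⟩
end

section
/- For every prime p ≥ 3 and every integer m ≥ 4, there exists a finite group U whose order is a power of p with the following properties: the subgroup U^p of U generated by the set {u^p : u ∈ U} is nontrivial, is contained in the center of U, satisfies z^p = 1 for every z ∈ U^p, and contains an element g ≠ 1 such that no nontrivial element of the cyclic subgroup generated by g can be written as a product a₁^p a₂^p ⋯ a_m^p of m p-th powers of elements a₁, …, a_m of U. -/
/-!
Take `R = 𝔽_p[X_1, …, X_n] / (X_1, …, X_n)^p` and let `t ∈ 𝔽_p^n` act on `R` by multiplication by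
the group-like element `∏ (1 + X_k)^{t_k}`; `U` is the semidirect product `R ⋊ 𝔽_p^n`. Since
`1 + w + ⋯ + w^{p-1} = (w - 1)^{p-1}` in characteristic `p`, the `p`-th power of `(r, t)` is
`(ε(r) ℓ_t^{p-1}, 0)`, where `ε` is the constant coefficient and `ℓ_t = ∑ t_k X_k`. So all `p`-th
powers lie in the image of `(X)^{p-1}`, which is central and killed by `p`.

The element `g = ∑ X_k^{p-1}` is a product of `p`-th powers. With `n = m + 1`, a relation
`c g = ∑_{i ≤ m} c_i ℓ_i^{p-1}` in `R` is homogeneous of degree `p - 1 < p`, so it already holds in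
the polynomial ring; differentiating by `X_k` puts the `n` independent monomials `X_k^{p-2}` in the
span of the `m` polynomials `ℓ_i^{p-2}` (this needs `p ≥ 3`).
-/

open MvPolynomial

theorem geom_sum_eq_sub_one_pow_of_charP {S : Type*} [CommRing S] (p : ℕ) [Fact p.Prime] [CharP S p]
    (y : S) : ∑ i ∈ Finset.range p, y ^ i = (y - 1) ^ (p - 1) := by
  have h := Polynomial.cyclotomic_mul_prime_eq_pow_of_not_dvd S (p := p) (n := 1)
    (Nat.Prime.not_dvd_one Fact.out)
  rw [one_mul, Polynomial.cyclotomic_prime, Polynomial.cyclotomic_one] at h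
  simpa using congr_arg (Polynomial.eval y) h

namespace Ideal

variable {S : Type*} [CommRing S] (J : Ideal S)

theorem pow_sub_pow_mem_pow_succ {x y : S} (hx : x ∈ J) (hy : y ∈ J) (hxy : x - y ∈ J ^ 2)
    (k : ℕ) : x ^ k - y ^ k ∈ J ^ (k + 1) := by
  induction k with
  | zero => simp
  | succ k ih =>
    have h : x ^ (k + 1) - y ^ (k + 1) = x * (x ^ k - y ^ k) + (x - y) * y ^ k := by ring
    rw [h]
    refine add_mem ?_ ?_
    · rw [pow_succ']
      exact mul_mem_mul hx ih
    · rw [show k + 1 + 1 = 2 + k by ring, pow_add]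
      exact mul_mem_mul hxy (pow_mem_pow hy k)

theorem one_add_pow_sub_one_sub_nsmul_mem_sq {a : S} (ha : a ∈ J) (k : ℕ) :
    (1 + a) ^ k - 1 - k • a ∈ J ^ 2 := by
  induction k with
  | zero => simp
  | succ k ih =>
    have h : (1 + a) ^ (k + 1) - 1 - (k + 1) • a
        = (1 + a) * ((1 + a) ^ k - 1 - k • a) + k • (a * a) := by
      simp only [nsmul_eq_mul]; push_cast; ring
    rw [h]
    exact add_mem (mul_mem_left _ _ ih) (nsmul_mem (by simpa [sq] using mul_mem_mul ha ha) k)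

theorem prod_one_add_pow_sub_one_sub_sum_mem_sq {ι : Type*} (s : Finset ι) (a : ι → S)
    (k : ι → ℕ) (ha : ∀ i ∈ s, a i ∈ J) :
    ∏ i ∈ s, (1 + a i) ^ k i - 1 - ∑ i ∈ s, k i • a i ∈ J ^ 2 := by
  classical
  induction s using Finset.induction_on with
  | empty => simp
  | insert i s hi ih =>
    rw [Finset.prod_insert hi, Finset.sum_insert hi]
    set x := (1 + a i) ^ k i
    set y := ∏ j ∈ s, (1 + a j) ^ k j
    have hx := one_add_pow_sub_one_sub_nsmul_mem_sq J (ha i (by simp)) (k i)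
    have hy := ih fun j hj => ha j (by simp [hj])
    have hs : ∑ j ∈ s, k j • a j ∈ J := J.sum_mem fun j hj => nsmul_mem (ha j (by simp [hj])) _
    have hx1 : x - 1 ∈ J := by
      simpa using add_mem (pow_le_self two_ne_zero hx) (nsmul_mem (ha i (by simp)) (k i))
    have hy1 : y - 1 ∈ J := by simpa using add_mem (pow_le_self two_ne_zero hy) hs
    have h : x * y - 1 - (k i • a i + ∑ j ∈ s, k j • a j)
        = (x - 1 - k i • a i) + (y - 1 - ∑ j ∈ s, k j • a j) + (x - 1) * (y - 1) := by ring
    rw [h]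
    exact add_mem (add_mem hx hy) (by simpa [sq] using mul_mem_mul hx1 hy1)

end Ideal

namespace MvPolynomial

variable {σ R : Type*} [CommSemiring R]

theorem X_mem_idealOfVars (k : σ) : X k ∈ idealOfVars σ R :=
  Ideal.subset_span ⟨k, rfl⟩

theorem IsHomogeneous.eq_zero_of_mem_pow_idealOfVars {φ : MvPolynomial σ R} {d k : ℕ}
    (hφ : φ.IsHomogeneous d) (hdk : d < k) (h : φ ∈ idealOfVars σ R ^ k) : φ = 0 := by
  ext x
  rw [coeff_zero]
  rcases lt_or_ge x.degree k with hx | hx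
  · exact (mem_pow_idealOfVars_iff' k φ).mp h x hx
  · exact hφ.coeff_eq_zero (by omega)

theorem sub_C_constantCoeff_mem_idealOfVars {S : Type*} [CommRing S] (φ : MvPolynomial σ S) :
    φ - C (constantCoeff φ) ∈ idealOfVars σ S := by
  rw [← pow_one (idealOfVars σ S), mem_pow_idealOfVars_iff']
  intro x hx
  obtain rfl : x = 0 := by simpa [Finsupp.degree_eq_zero_iff] using hx
  simp [constantCoeff_eq]

theorem linearIndependent_X_pow {K : Type*} [Field K] {d : ℕ} (hd : d ≠ 0) :
    LinearIndependent K fun k : σ => (X k : MvPolynomial σ K) ^ d := by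
  simpa [Function.comp_def, X_pow_eq_monomial] using
    (basisMonomials σ K).linearIndependent.comp _ (Finsupp.single_left_injective hd)

noncomputable section

variable [Fintype σ]

def linearForm (e : σ → R) : MvPolynomial σ R := ∑ k, C (e k) * X k

theorem linearForm_mem_idealOfVars (e : σ → R) : linearForm e ∈ idealOfVars σ R :=
  Ideal.sum_mem _ fun k _ => Ideal.mul_mem_left _ _ (X_mem_idealOfVars k)

theorem isHomogeneous_linearForm (e : σ → R) : (linearForm e).IsHomogeneous 1 :=
  IsHomogeneous.sum _ _ _ fun k _ => (isHomogeneous_X R k).C_mul _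

theorem pderiv_linearForm (e : σ → R) (k : σ) : pderiv k (linearForm e) = C (e k) := by
  classical
  simp [linearForm, pderiv_X, Pi.single_apply]

theorem X_pow_pred_mem_span_of_sum_X_pow_mem_span {K ι : Type*} [Field K] {d : ℕ}
    (hdK : (d : K) ≠ 0) (e : ι → σ → K)
    (h : ∑ k, X k ^ d ∈ Submodule.span K (Set.range fun i => linearForm (e i) ^ d)) (k : σ) :
    X k ^ (d - 1) ∈ Submodule.span K (Set.range fun i => linearForm (e i) ^ (d - 1)) := by
  set V := Submodule.span K (Set.range fun i => linearForm (e i) ^ (d - 1))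
  have hderiv : Submodule.span K (Set.range fun i => linearForm (e i) ^ d)
      ≤ V.comap (pderiv k).toLinearMap := by
    rw [Submodule.span_le]
    rintro _ ⟨i, rfl⟩
    have h : pderiv k (linearForm (e i) ^ d) = ((d : K) * e i k) • linearForm (e i) ^ (d - 1) := by
      rw [pderiv_pow, pderiv_linearForm, smul_eq_C_mul, map_mul, map_natCast]
      ring
    simpa [h] using V.smul_mem _ (Submodule.subset_span ⟨i, rfl⟩)
  have hsum : pderiv k (∑ j, (X j : MvPolynomial σ K) ^ d) = (d : K) • X k ^ (d - 1) := by
    classical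
    simp [pderiv_X, Pi.single_apply, smul_eq_C_mul]
  have := hderiv h
  rw [Submodule.mem_comap, Derivation.coeFn_coe, hsum] at this
  exact (V.smul_mem_iff hdK).mp this

theorem card_le_of_sum_X_pow_mem_span {K ι : Type*} [Field K] [Fintype ι] {d : ℕ} (hd : 2 ≤ d)
    (hdK : (d : K) ≠ 0) (e : ι → σ → K)
    (h : ∑ k, X k ^ d ∈ Submodule.span K (Set.range fun i => linearForm (e i) ^ d)) :
    Fintype.card σ ≤ Fintype.card ι := by
  set V := Submodule.span K (Set.range fun i => linearForm (e i) ^ (d - 1))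
  have : FiniteDimensional K V := FiniteDimensional.span_of_finite K (Set.finite_range _)
  have hli : LinearIndependent K fun k =>
      (⟨X k ^ (d - 1), X_pow_pred_mem_span_of_sum_X_pow_mem_span hdK e h k⟩ : V) :=
    LinearIndependent.of_comp V.subtype (linearIndependent_X_pow (by omega))
  exact hli.fintype_card_le_finrank.trans (finrank_range_le_card _)

end

end MvPolynomial

namespace AuxiliaryGroup

noncomputable section

variable (p n : ℕ)

abbrev TruncPoly : Type := MvPolynomial (Fin n) (ZMod p) ⧸ idealOfVars (Fin n) (ZMod p) ^ p

def vars : Ideal (TruncPoly p n) :=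
  (idealOfVars (Fin n) (ZMod p)).map (Ideal.Quotient.mk _)

theorem vars_pow_prime : vars p n ^ p = ⊥ := by
  rw [vars, ← Ideal.map_pow, Ideal.map_quotient_self]

variable {p n}

theorem mk_mem_vars {φ : MvPolynomial (Fin n) (ZMod p)} (h : φ ∈ idealOfVars (Fin n) (ZMod p)) :
    Ideal.Quotient.mk _ φ ∈ vars p n :=
  Ideal.mem_map_of_mem _ h

def groupLike (t : Fin n → ZMod p) : TruncPoly p n :=
  ∏ k, (1 + Ideal.Quotient.mk _ (X k)) ^ (t k).val

def lin (t : Fin n → ZMod p) : TruncPoly p n := Ideal.Quotient.mk _ (linearForm t)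

theorem lin_mem_vars (t : Fin n → ZMod p) : lin t ∈ vars p n :=
  mk_mem_vars (linearForm_mem_idealOfVars t)

variable [hp : Fact p.Prime]

instance : Nontrivial (TruncPoly p n) := by
  refine Ideal.Quotient.nontrivial_iff.mpr ((Ideal.ne_top_iff_one _).mpr ?_)
  simpa [hp.out.ne_zero] using C_mem_pow_idealOfVars_iff (σ := Fin n) p (1 : ZMod p)

instance : CharP (TruncPoly p n) p := charP_of_injective_algebraMap' (ZMod p) p

def constCoeff : TruncPoly p n →+* ZMod p :=
  Ideal.Quotient.lift _ constantCoeff fun φ hφ => by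
    simpa [constantCoeff_eq] using (mem_pow_idealOfVars_iff' p φ).mp hφ 0 (by simp [hp.out.pos])

theorem sub_algebraMap_constCoeff_mem_vars (r : TruncPoly p n) :
    r - algebraMap (ZMod p) _ (constCoeff r) ∈ vars p n := by
  obtain ⟨φ, rfl⟩ := Ideal.Quotient.mk_surjective r
  rw [constCoeff, Ideal.Quotient.lift_mk, ← Ideal.Quotient.mk_algebraMap, algebraMap_eq, ← map_sub]
  exact mk_mem_vars (sub_C_constantCoeff_mem_idealOfVars φ)

instance : Module.Finite (ZMod p) (TruncPoly p n) := by
  have : Algebra.IsIntegral (ZMod p) (TruncPoly p n) := ⟨fun r => by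
    have hnil : (r - algebraMap (ZMod p) _ (constCoeff r)) ^ p = 0 := by
      rw [← Ideal.mem_bot, ← vars_pow_prime]
      exact Ideal.pow_mem_pow (sub_algebraMap_constCoeff_mem_vars r) p
    have hint : IsIntegral (ZMod p) (r - algebraMap (ZMod p) _ (constCoeff r)) :=
      ⟨Polynomial.X ^ p, Polynomial.monic_X_pow p, by simp [hnil]⟩
    simpa using hint.add (isIntegral_algebraMap (x := constCoeff r))⟩
  have : Algebra.FiniteType (ZMod p) (TruncPoly p n) :=
    Algebra.FiniteType.of_surjective (Ideal.Quotient.mkₐ (ZMod p) _)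
      (Ideal.Quotient.mkₐ_surjective _ _)
  exact Algebra.IsIntegral.finite

theorem one_add_mk_X_pow_prime (k : Fin n) :
    (1 + Ideal.Quotient.mk _ (X k) : TruncPoly p n) ^ p = 1 := by
  rw [add_pow_char, one_pow, ← map_pow, Ideal.Quotient.eq_zero_iff_mem.mpr
    (Ideal.pow_mem_pow (X_mem_idealOfVars k) p), add_zero]

@[simp]
theorem groupLike_zero : groupLike (0 : Fin n → ZMod p) = 1 := by simp [groupLike]

theorem groupLike_add (t s : Fin n → ZMod p) : groupLike (t + s) = groupLike t * groupLike s := by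
  simp only [groupLike, ← Finset.prod_mul_distrib, ← pow_add, Pi.add_apply, ZMod.val_add]
  exact Finset.prod_congr rfl fun k _ => (pow_eq_pow_mod _ (one_add_mk_X_pow_prime k)).symm

theorem groupLike_sub_one_sub_lin_mem (t : Fin n → ZMod p) :
    groupLike t - 1 - lin t ∈ vars p n ^ 2 := by
  have hlin : lin t = ∑ k, (t k).val • Ideal.Quotient.mk _ (X k) := by
    simp only [lin, linearForm, map_sum, map_mul, nsmul_eq_mul]
    refine Finset.sum_congr rfl fun k _ => ?_
    rw [← algebraMap_eq, Ideal.Quotient.mk_algebraMap, ← map_natCast (algebraMap (ZMod p) _),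
      ZMod.natCast_zmod_val]
  rw [hlin]
  exact Ideal.prod_one_add_pow_sub_one_sub_sum_mem_sq (vars p n) Finset.univ _
    (fun k => (t k).val) fun k _ => mk_mem_vars (X_mem_idealOfVars k)

theorem groupLike_sub_one_mem_vars (t : Fin n → ZMod p) : groupLike t - 1 ∈ vars p n := by
  simpa using
    add_mem (Ideal.pow_le_self two_ne_zero (groupLike_sub_one_sub_lin_mem t)) (lin_mem_vars t)

theorem groupLike_sub_one_pow_mul (t : Fin n → ZMod p) (r : TruncPoly p n) :
    (groupLike t - 1) ^ (p - 1) * r = constCoeff r • lin t ^ (p - 1) := by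
  have hp1 : p - 1 + 1 = p := Nat.sub_add_cancel hp.out.one_le
  have hpow : (groupLike t - 1) ^ (p - 1) = lin t ^ (p - 1) := by
    have := Ideal.pow_sub_pow_mem_pow_succ _ (groupLike_sub_one_mem_vars t) (lin_mem_vars t)
      (groupLike_sub_one_sub_lin_mem t) (p - 1)
    rwa [hp1, vars_pow_prime, Ideal.mem_bot, sub_eq_zero] at this
  have hr : lin t ^ (p - 1) * (r - algebraMap (ZMod p) _ (constCoeff r)) = 0 := by
    have := Ideal.mul_mem_mul (Ideal.pow_mem_pow (lin_mem_vars t) (p - 1))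
      (sub_algebraMap_constCoeff_mem_vars r)
    rwa [← Submodule.pow_succ, hp1, vars_pow_prime, Ideal.mem_bot] at this
  rw [hpow, Algebra.smul_def (constCoeff r) (lin t ^ (p - 1))]
  linear_combination hr

variable (p n) in
@[ext]
structure U where
  r : TruncPoly p n
  t : Fin n → ZMod p

instance : Mul (U p n) := ⟨fun u v => ⟨u.r + groupLike u.t * v.r, u.t + v.t⟩⟩
instance : One (U p n) := ⟨⟨0, 0⟩⟩
instance : Inv (U p n) := ⟨fun u => ⟨-(groupLike (-u.t) * u.r), -u.t⟩⟩

@[simp] theorem mul_r (u v : U p n) : (u * v).r = u.r + groupLike u.t * v.r := rfl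
@[simp] theorem mul_t (u v : U p n) : (u * v).t = u.t + v.t := rfl
@[simp] theorem one_r : (1 : U p n).r = 0 := rfl
@[simp] theorem one_t : (1 : U p n).t = 0 := rfl
@[simp] theorem inv_r (u : U p n) : u⁻¹.r = -(groupLike (-u.t) * u.r) := rfl
@[simp] theorem inv_t (u : U p n) : u⁻¹.t = -u.t := rfl

instance : Group (U p n) where
  mul_assoc u v w := by ext <;> simp [groupLike_add] <;> ring
  one_mul u := by ext <;> simp
  mul_one u := by ext <;> simp
  inv_mul_cancel u := by ext <;> simp

theorem pow_r (u : U p n) (j : ℕ) :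
    (u ^ j).r = (∑ i ∈ Finset.range j, groupLike u.t ^ i) * u.r := by
  induction j with
  | zero => simp
  | succ j ih =>
    rw [pow_succ', mul_r, ih, geom_sum_succ]
    ring

theorem pow_t (u : U p n) (j : ℕ) : (u ^ j).t = j • u.t := by
  induction j with
  | zero => simp
  | succ j ih => rw [pow_succ, mul_t, ih, succ_nsmul]

variable (p n) in
def ofRing : Multiplicative (TruncPoly p n) →* U p n where
  toFun r := ⟨r.toAdd, 0⟩
  map_one' := rfl
  map_mul' _ _ := by ext <;> simp

theorem ofRing_injective : Function.Injective (ofRing p n) :=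
  fun _ _ h => congr_arg U.r h

theorem pow_prime (u : U p n) :
    u ^ p = ofRing p n (.ofAdd (constCoeff u.r • lin u.t ^ (p - 1))) := by
  ext
  · rw [pow_r, geom_sum_eq_sub_one_pow_of_charP, groupLike_sub_one_pow_mul]
    rfl
  · simp [pow_t, ofRing]

variable (p n) in
def centralSubgroup : Subgroup (U p n) where
  carrier := {u | u.t = 0 ∧ u.r ∈ vars p n ^ (p - 1)}
  one_mem' := ⟨rfl, zero_mem _⟩
  mul_mem' := by
    rintro u v ⟨hu, hu'⟩ ⟨hv, hv'⟩
    exact ⟨by simp [hu, hv], by simpa [hu] using add_mem hu' hv'⟩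
  inv_mem' := by
    rintro u ⟨hu, hu'⟩
    exact ⟨by simp [hu], by simpa [hu] using hu'⟩

theorem pow_prime_mem_centralSubgroup (u : U p n) : u ^ p ∈ centralSubgroup p n := by
  rw [pow_prime]
  refine ⟨rfl, ?_⟩
  change constCoeff u.r • lin u.t ^ (p - 1) ∈ _
  rw [Algebra.smul_def (constCoeff u.r) (lin u.t ^ (p - 1))]
  exact Ideal.mul_mem_left _ _ (Ideal.pow_mem_pow (lin_mem_vars u.t) (p - 1))

theorem mem_center_of_mem_centralSubgroup {z : U p n} (hz : z ∈ centralSubgroup p n) :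
    z ∈ Subgroup.center (U p n) := by
  rw [Subgroup.mem_center_iff]
  intro u
  have hfix : z.r * (groupLike u.t - 1) = 0 := by
    have := Ideal.mul_mem_mul hz.2 (groupLike_sub_one_mem_vars u.t)
    rwa [← Submodule.pow_succ, Nat.sub_add_cancel hp.out.one_le, vars_pow_prime,
      Ideal.mem_bot] at this
  ext
  · simp only [mul_r, hz.1, groupLike_zero, one_mul]
    linear_combination hfix
  · simp [hz.1, add_comm]

theorem pow_prime_eq_one_of_mem_centralSubgroup {z : U p n} (hz : z ∈ centralSubgroup p n) :
    z ^ p = 1 := by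
  ext
  · simp [pow_r, hz.1]
  · simp [pow_t, hz.1]

theorem isPGroup : IsPGroup p (U p n) :=
  fun u => ⟨2, by rw [sq, pow_mul]; exact
    pow_prime_eq_one_of_mem_centralSubgroup (pow_prime_mem_centralSubgroup u)⟩

instance : Finite (U p n) :=
  have : Finite (TruncPoly p n) := Module.finite_of_finite (ZMod p)
  Finite.of_injective (fun u : U p n => (u.r, u.t)) fun _ _ h =>
    U.ext (congr_arg Prod.fst h) (congr_arg Prod.snd h)

variable (p n) in
def fermat : TruncPoly p n := Ideal.Quotient.mk _ (∑ k, X k ^ (p - 1))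

theorem pow_prime_mk_one_single (k : Fin n) :
    (⟨1, Pi.single k 1⟩ : U p n) ^ p =
      ofRing p n (.ofAdd (Ideal.Quotient.mk _ (X k ^ (p - 1)))) := by
  have : linearForm (Pi.single k (1 : ZMod p)) = X k := by
    classical
    simp [linearForm, Pi.single_apply]
  rw [pow_prime, map_one, one_smul, lin, this, map_pow (Ideal.Quotient.mk _)]

theorem ofRing_fermat_mem_closure :
    ofRing p n (.ofAdd (fermat p n)) ∈ Subgroup.closure {x | ∃ u : U p n, u ^ p = x} := by
  rw [← Subgroup.mem_comap, fermat, map_sum, ofAdd_sum]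
  exact Subgroup.prod_mem _ fun k _ => Subgroup.subset_closure ⟨_, pow_prime_mk_one_single k⟩

theorem le_of_fermat_mem_span (hp3 : 3 ≤ p) {ι : Type*} [Fintype ι] (e : ι → Fin n → ZMod p)
    (h : fermat p n ∈ Submodule.span (ZMod p) (Set.range fun i => lin (e i) ^ (p - 1))) :
    n ≤ Fintype.card ι := by
  set S := Submodule.span (ZMod p) (Set.range fun i => linearForm (e i) ^ (p - 1))
  have hrange : (Set.range fun i => lin (e i) ^ (p - 1)) =
      (Ideal.Quotient.mkₐ (ZMod p) _).toLinearMap ''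
        Set.range fun i => linearForm (e i) ^ (p - 1) := by
    rw [← Set.range_comp]
    rfl
  rw [hrange, Submodule.span_image] at h
  obtain ⟨φ, hφ, hφF⟩ := h
  have hS : S ≤ homogeneousSubmodule (Fin n) (ZMod p) (p - 1) := by
    rw [Submodule.span_le]
    rintro _ ⟨i, rfl⟩
    simpa using (isHomogeneous_linearForm (e i)).pow (p - 1)
  have hF : ∑ k, X k ^ (p - 1) = φ := by
    refine sub_eq_zero.mp (IsHomogeneous.eq_zero_of_mem_pow_idealOfVars (d := p - 1) ?_ (by omega)
      (Ideal.Quotient.eq.mp hφF.symm))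
    refine IsHomogeneous.sub (IsHomogeneous.sum _ _ _ fun k _ => ?_) (hS hφ)
    simpa using (isHomogeneous_X (ZMod p) k).pow (p - 1)
  have hcast : ((p - 1 : ℕ) : ZMod p) ≠ 0 := by
    rw [Nat.cast_sub hp.out.one_le, ZMod.natCast_self, Nat.cast_one, zero_sub, neg_ne_zero]
    exact one_ne_zero
  simpa using card_le_of_sum_X_pow_mem_span (by omega) hcast e (hF ▸ hφ)

theorem list_prod_pow_prime {m : ℕ} (a : Fin m → U p n) :
    (List.ofFn fun i => a i ^ p).prod =
      ofRing p n (.ofAdd (∑ i, constCoeff (a i).r • lin (a i).t ^ (p - 1))) := by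
  simp only [pow_prime, ofAdd_sum, ← List.prod_ofFn, map_list_prod, List.map_ofFn,
    Function.comp_def]

theorem ofRing_smul_fermat_ne_list_prod (hp3 : 3 ≤ p) {m : ℕ} (hmn : m < n) {c : ZMod p}
    (hc : c ≠ 0) (a : Fin m → U p n) :
    ofRing p n (.ofAdd (c • fermat p n)) ≠ (List.ofFn fun i => a i ^ p).prod := by
  rw [list_prod_pow_prime]
  intro h
  have hsum := Multiplicative.ofAdd.injective (ofRing_injective h)
  have hmem : fermat p n ∈ Submodule.span (ZMod p) (Set.range fun i => lin (a i).t ^ (p - 1)) := by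
    refine (Submodule.smul_mem_iff _ hc).mp ?_
    rw [hsum]
    exact Submodule.sum_mem _ fun i _ => Submodule.smul_mem _ _ (Submodule.subset_span ⟨i, rfl⟩)
  have := le_of_fermat_mem_span hp3 _ hmem
  simp only [Fintype.card_fin] at this
  omega

end

end AuxiliaryGroup

theorem exists_auxiliary_finite_p_group_general
    (p : ℕ) (hp : p.Prime) (hp3 : 3 ≤ p) (m : ℕ) :
    ∃ (U : Type) (hU : Group U), haveI := hU;
      (∃ k : ℕ, Nat.card U = p ^ k) ∧
      (let Up : Subgroup U := Subgroup.closure {x : U | ∃ u : U, u ^ p = x};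
        Up ≠ ⊥ ∧
        (∀ z ∈ Up, z ∈ Subgroup.center U) ∧
        (∀ z ∈ Up, z ^ p = 1) ∧
        (∃ g : U, g ∈ Up ∧ g ≠ 1 ∧
          ∀ h ∈ Subgroup.zpowers g, h ≠ 1 →
            ¬ ∃ a : Fin m → U, h = (List.ofFn fun i => (a i) ^ p).prod)) := by
  open AuxiliaryGroup in
  have : Fact p.Prime := ⟨hp⟩
  refine ⟨U p (m + 1), inferInstance, IsPGroup.iff_card.mp isPGroup, ?_⟩
  intro Up
  have hUp : Up ≤ centralSubgroup p (m + 1) := (Subgroup.closure_le _).mpr <| by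
    rintro _ ⟨u, rfl⟩
    exact pow_prime_mem_centralSubgroup u
  set g := ofRing p (m + 1) (.ofAdd (fermat p (m + 1)))
  have hg : g ∈ Up := ofRing_fermat_mem_closure
  -- `g ≠ 1` is the case of an empty product of `p`-th powers.
  have hg1 : g ≠ 1 := by
    simpa using
      ofRing_smul_fermat_ne_list_prod (n := m + 1) hp3 (Nat.succ_pos m) one_ne_zero Fin.elim0
  refine ⟨fun h => hg1 (by simpa [h] using hg),
    fun z hz => mem_center_of_mem_centralSubgroup (hUp hz),
    fun z hz => pow_prime_eq_one_of_mem_centralSubgroup (hUp hz), g, hg, hg1, ?_⟩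
  rintro h hh hne ⟨a, ha⟩
  obtain ⟨j, rfl⟩ := Subgroup.mem_zpowers_iff.mp hh
  have hgj : g ^ j = ofRing p (m + 1) (.ofAdd ((j : ZMod p) • fermat p (m + 1))) := by
    rw [← map_zpow, ← ofAdd_zsmul, Int.cast_smul_eq_zsmul]
  have hj : (j : ZMod p) ≠ 0 := fun hj => hne (by rw [hgj, hj, zero_smul, ofAdd_zero, map_one])
  exact ofRing_smul_fermat_ne_list_prod hp3 (Nat.lt_succ_self m) hj a (hgj ▸ ha)

/-- For every prime `p ≥ 3` and every `m ≥ 4` there is a finite `p`-group `U` whose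
verbal subgroup `U^p` (generated by all `p`-th powers) is nontrivial, central, of
exponent `p`, and contains an element `g ≠ 1` such that no nontrivial element of
`⟨g⟩` is a product of `m` `p`-th powers in `U`. -/
theorem exists_auxiliary_finite_p_group
    (p : ℕ) (hp : p.Prime) (hp3 : 3 ≤ p) (m : ℕ) (hm : 4 ≤ m) :
    ∃ (U : Type) (hU : Group U), haveI := hU;
      (∃ k : ℕ, Nat.card U = p ^ k) ∧
      (let Up : Subgroup U := Subgroup.closure {x : U | ∃ u : U, u ^ p = x};
        Up ≠ ⊥ ∧
        (∀ z ∈ Up, z ∈ Subgroup.center U) ∧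
        (∀ z ∈ Up, z ^ p = 1) ∧
        (∃ g : U, g ∈ Up ∧ g ≠ 1 ∧
          ∀ h ∈ Subgroup.zpowers g, h ≠ 1 →
            ¬ ∃ a : Fin m → U, h = (List.ofFn fun i => (a i) ^ p).prod)) :=
  exists_auxiliary_finite_p_group_general p hp hp3 m
end

section
/- Let m and n be positive integers with gcd(m, n) = 1, and let G be a group. Then G satisfies (g^n h^n)^m = 1 for all g, h ∈ G if and only if G has a normal subgroup N with x^m = 1 for all x ∈ N such that every element of G/N has n-th power equal to the identity. Equivalently, all the identities of the product variety B_mB_n follow from the single identity (x₁^n x₂^n)^m = 1: the class of groups satisfying (x₁^n x₂^n)^m = 1 coincides with B_mB_n. -/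
/-! Since `n` is invertible modulo `m`, every `x` with `x ^ m = 1` is an `n`-th power of a power
of itself. The identity `(g ^ n * h ^ n) ^ m = 1` therefore says exactly that the elements of
exponent dividing `m` are closed under multiplication, so they form a normal subgroup `N`; taking
`h = 1` shows that every `n`-th power lies in `N`. Conversely, in a group of `B_m B_n` the
element `g ^ n * h ^ n` lies in the normal subgroup of exponent dividing `m`. -/

theorem exists_pow_eq_of_pow_eq_one_of_coprime {M : Type*} [Monoid M] {m n : ℕ}
    (hco : m.Coprime n) {x : M} (hx : x ^ m = 1) : ∃ y : M, y ^ n = x := by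
  obtain ⟨k, hk⟩ := exists_pow_eq_self_of_coprime
    ((hco.coprime_dvd_left (orderOf_dvd_of_pow_eq_one hx)).symm)
  exact ⟨x ^ k, by rw [← pow_mul, mul_comm, pow_mul, hk]⟩

theorem mul_pow_eq_one_of_pow_mul_pow_pow_eq_one {G : Type*} [Group G] {m n : ℕ}
    (hco : m.Coprime n) (hid : ∀ g h : G, (g ^ n * h ^ n) ^ m = 1) {x y : G}
    (hx : x ^ m = 1) (hy : y ^ m = 1) : (x * y) ^ m = 1 := by
  obtain ⟨a, rfl⟩ := exists_pow_eq_of_pow_eq_one_of_coprime hco hx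
  obtain ⟨b, rfl⟩ := exists_pow_eq_of_pow_eq_one_of_coprime hco hy
  exact hid a b

section PowEqOneSubgroup

variable {G : Type*} [Group G]

def powEqOneSubgroup (m : ℕ) (hmul : ∀ x y : G, x ^ m = 1 → y ^ m = 1 → (x * y) ^ m = 1) :
    Subgroup G where
  carrier := {x | x ^ m = 1}
  one_mem' := one_pow m
  mul_mem' := hmul _ _
  inv_mem' := by
    rintro x (hx : x ^ m = 1)
    show x⁻¹ ^ m = 1
    rw [inv_pow, hx, inv_one]

theorem mem_powEqOneSubgroup {m : ℕ} {hmul : ∀ x y : G, x ^ m = 1 → y ^ m = 1 → (x * y) ^ m = 1}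
    {x : G} : x ∈ powEqOneSubgroup m hmul ↔ x ^ m = 1 :=
  Iff.rfl

instance powEqOneSubgroup_normal (m : ℕ)
    (hmul : ∀ x y : G, x ^ m = 1 → y ^ m = 1 → (x * y) ^ m = 1) :
    (powEqOneSubgroup m hmul).Normal where
  conj_mem x hx g := by
    rw [mem_powEqOneSubgroup] at hx ⊢
    rw [conj_pow, hx, mul_one, mul_inv_cancel]

end PowEqOneSubgroup

theorem QuotientGroup.forall_pow_eq_one_iff {G : Type*} [Group G] (N : Subgroup G) [N.Normal]
    (n : ℕ) : (∀ x : G ⧸ N, x ^ n = 1) ↔ ∀ g : G, g ^ n ∈ N := by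
  simp only [QuotientGroup.forall_mk, ← QuotientGroup.mk_pow, QuotientGroup.eq_one_iff]

theorem BmBn_single_identity_general (m n : ℕ)
    (hco : Nat.gcd m n = 1) (G : Type) [Group G] :
    (∀ g h : G, (g ^ n * h ^ n) ^ m = 1) ↔
      ∃ N : Subgroup G, ∃ hN : N.Normal,
        (∀ x ∈ N, x ^ m = 1) ∧ (haveI := hN; ∀ x : G ⧸ N, x ^ n = 1) := by
  constructor
  · intro hid
    have hmul : ∀ x y : G, x ^ m = 1 → y ^ m = 1 → (x * y) ^ m = 1 := fun _ _ =>
      mul_pow_eq_one_of_pow_mul_pow_pow_eq_one hco hid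
    refine ⟨powEqOneSubgroup m hmul, inferInstance, fun _ hx => hx, ?_⟩
    rw [QuotientGroup.forall_pow_eq_one_iff]
    exact fun g => mem_powEqOneSubgroup.2 (by simpa using hid g 1)
  · rintro ⟨N, hN, hNm, hQ⟩ g h
    rw [QuotientGroup.forall_pow_eq_one_iff] at hQ
    exact hNm _ (N.mul_mem (hQ g) (hQ h))

/-- For coprime positive integers `m` and `n`, a group `G` satisfies the single identity
`(x₁^n x₂^n)^m = 1` if and only if `G` belongs to the product variety `B_m B_n`, i.e.
`G` has a normal subgroup of exponent dividing `m` with quotient of exponent dividing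
`n`. -/
theorem BmBn_single_identity (m n : ℕ) (hm : 0 < m) (hn : 0 < n)
    (hco : Nat.gcd m n = 1) (G : Type) [Group G] :
    (∀ g h : G, (g ^ n * h ^ n) ^ m = 1) ↔
      ∃ N : Subgroup G, ∃ hN : N.Normal,
        (∀ x ∈ N, x ^ m = 1) ∧ (haveI := hN; ∀ x : G ⧸ N, x ^ n = 1) :=
  BmBn_single_identity_general m n hco G
end

section
/- For all positive integers k, c, and e, there exists a bound B = B(k, c, e) such that every group that is generated by at most k elements, is nilpotent of nilpotency class at most c, and has exponent dividing e (g^e = 1 for all its elements g), is finite of order at most B. -/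
/-!
Induct on the class. If `G` has class `c + 1`, then `G ⧸ Z(G)` has class `c` and inherits the
generators and the exponent, so its order `i = [G : Z(G)]` is bounded by induction. A commutator
only depends on its arguments modulo `Z(G)`, so `G` has at most `i ^ 2` commutators, and Schur's
theorem in the quantitative form `|G'| ∣ i ^ (i * #commutators + 1)` bounds `|G'|` by
`i ^ (i ^ 3 + 1)`. Finally `G ⧸ G'` is a `k`-generated abelian group of exponent dividing `e`,
hence of order at most `e ^ k`.
-/

open Subgroup
open scoped commutatorElement

section

variable {G H : Type*} [Group G] [Group H]

theorem Subgroup.closure_image_eq_top {f : G →* H} (hf : Function.Surjective f) {s : Set G}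
    (hs : closure s = ⊤) : closure (f '' s) = ⊤ := by
  rw [← MonoidHom.map_closure, hs, map_top_of_surjective f hf]

theorem Subgroup.lowerCentralSeries_quotient_center_eq_bot {n : ℕ}
    (h : (⊤ : Subgroup G).lowerCentralSeries (n + 1) = ⊥) :
    (⊤ : Subgroup (G ⧸ center G)).lowerCentralSeries n = ⊥ := by
  rw [lowerCentralSeries_eq_bot_iff_upperCentralSeries_eq_top] at h ⊢
  rw [← comap_upperCentralSeries_quotient_center,
    ← comap_top (QuotientGroup.mk' (center G))] at h
  exact comap_injective (QuotientGroup.mk'_surjective _) h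

theorem commutatorElement_mul_mem_center_mul_mem_center (a b : G) {z w : G}
    (hz : z ∈ center G) (hw : w ∈ center G) : ⁅a * z, b * w⁆ = ⁅a, b⁆ := by
  rw [commutatorElement_mul_left_eq_conj_mul,
    commutatorElement_eq_one_iff_mul_comm.mpr (mem_center_iff.mp hz _).symm,
    commutatorElement_mul_right_eq_mul_conj,
    commutatorElement_eq_one_iff_mul_comm.mpr (mem_center_iff.mp hw _)]
  group

theorem commutatorSet_eq_range_quotient_center :
    commutatorSet G =
      Set.range fun p : (G ⧸ center G) × (G ⧸ center G) => ⁅p.1.out, p.2.out⁆ := by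
  ext x
  constructor
  · rintro ⟨g₁, g₂, rfl⟩
    obtain ⟨z, hz⟩ := QuotientGroup.mk_out_eq_mul (center G) g₁
    obtain ⟨w, hw⟩ := QuotientGroup.mk_out_eq_mul (center G) g₂
    refine ⟨(g₁, g₂), ?_⟩
    dsimp only
    rw [hz, hw, commutatorElement_mul_mem_center_mul_mem_center _ _ z.2 w.2]
  · rintro ⟨p, rfl⟩
    exact commutator_mem_commutatorSet _ _

instance Subgroup.finite_commutatorSet_of_finiteIndex_center [FiniteIndex (center G)] :
    Finite (commutatorSet G) := by
  rw [commutatorSet_eq_range_quotient_center]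
  infer_instance

theorem Subgroup.card_commutatorSet_le_index_center_sq [FiniteIndex (center G)] :
    Nat.card (commutatorSet G) ≤ (center G).index ^ 2 := by
  rw [commutatorSet_eq_range_quotient_center, index_eq_card, sq, ← Nat.card_prod]
  exact Finite.card_range_le _

theorem Subgroup.card_commutator_le_index_center_pow [FiniteIndex (center G)] :
    Nat.card (_root_.commutator G) ≤ (center G).index ^ ((center G).index ^ 3 + 1) := by
  have hi : 0 < (center G).index := Nat.pos_of_ne_zero FiniteIndex.index_ne_zero
  have hpow : (center G).index * Nat.card (commutatorSet G) + 1 ≤ (center G).index ^ 3 + 1 := by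
    have := Nat.mul_le_mul_left (center G).index (card_commutatorSet_le_index_center_sq (G := G))
    rw [pow_succ' _ 2]
    omega
  exact (Nat.le_of_dvd (pow_pos hi _) (card_commutator_dvd_index_center_pow G)).trans
    (Nat.pow_le_pow_right hi hpow)

end

theorem CommGroup.finite_and_card_le_pow {G : Type*} [CommGroup G] {k e : ℕ} (he : 0 < e)
    (hexp : Monoid.exponent G ∣ e) {s : Finset G} (hs : closure (s : Set G) = ⊤)
    (hsk : s.card ≤ k) : Finite G ∧ Nat.card G ≤ e ^ k := by
  have : Group.FG G := ⟨⟨s, hs⟩⟩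
  have hdvd : Nat.card G ∣ e ^ Group.rank G :=
    (card_dvd_exponent_pow_rank G).trans (pow_dvd_pow_of_dvd hexp _)
  have hpos : 0 < e ^ Group.rank G := pow_pos he _
  exact ⟨Nat.finite_of_card_ne_zero (ne_zero_of_dvd_ne_zero hpos.ne' hdvd),
    (Nat.le_of_dvd hpos hdvd).trans (Nat.pow_le_pow_right he ((Group.rank_le hs).trans hsk))⟩

def nilpotentOrderBound (k e : ℕ) : ℕ → ℕ
  | 0 => 1
  | c + 1 => e ^ k * nilpotentOrderBound k e c ^ (nilpotentOrderBound k e c ^ 3 + 1)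

theorem finite_and_card_le_nilpotentOrderBound {G : Type*} [Group G] {k e c : ℕ} (he : 0 < e)
    (hexp : Monoid.exponent G ∣ e) {s : Finset G} (hs : closure (s : Set G) = ⊤)
    (hsk : s.card ≤ k) (hc : (⊤ : Subgroup G).lowerCentralSeries c = ⊥) :
    Finite G ∧ Nat.card G ≤ nilpotentOrderBound k e c := by
  induction c generalizing G with
  | zero =>
    have : Subsingleton G := subsingleton_iff.mp (_root_.subsingleton_iff_bot_eq_top.mp hc.symm)
    exact ⟨inferInstance, Finite.card_le_one_iff_subsingleton.mpr this⟩
  | succ c ih =>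
    classical
    have hZ := QuotientGroup.mk'_surjective (center G)
    obtain ⟨hQ, hQcard⟩ := ih ((MonoidHom.exponent_dvd hZ).trans hexp)
      (s := s.image (QuotientGroup.mk' (center G)))
      (by rw [Finset.coe_image]; exact closure_image_eq_top hZ hs)
      (Finset.card_image_le.trans hsk) (lowerCentralSeries_quotient_center_eq_bot hc)
    have : FiniteIndex (center G) := finiteIndex_of_finite_quotient
    have hab : Function.Surjective (Abelianization.of (G := G)) := QuotientGroup.mk_surjective
    obtain ⟨hA, hAcard⟩ := CommGroup.finite_and_card_le_pow he
      ((MonoidHom.exponent_dvd hab).trans hexp) (s := s.image Abelianization.of)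
      (by rw [Finset.coe_image]; exact closure_image_eq_top hab hs)
      (Finset.card_image_le.trans hsk)
    set B := nilpotentOrderBound k e c
    have hiB : (center G).index ≤ B := index_eq_card (center G) ▸ hQcard
    have hi : 0 < (center G).index := Nat.pos_of_ne_zero FiniteIndex.index_ne_zero
    have hcomm : Nat.card (commutator G) ≤ B ^ (B ^ 3 + 1) :=
      calc Nat.card (commutator G) ≤ (center G).index ^ ((center G).index ^ 3 + 1) :=
            card_commutator_le_index_center_pow
        _ ≤ B ^ ((center G).index ^ 3 + 1) := Nat.pow_le_pow_left hiB _
        _ ≤ B ^ (B ^ 3 + 1) := Nat.pow_le_pow_right (hi.trans_le hiB) (by gcongr)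
    have hcard : Nat.card G = Nat.card (Abelianization G) * Nat.card (commutator G) :=
      card_eq_card_quotient_mul_card_subgroup _
    refine ⟨Nat.finite_of_card_ne_zero ?_, hcard ▸ Nat.mul_le_mul hAcard hcomm⟩
    rw [hcard]
    exact mul_ne_zero Nat.card_pos.ne' Nat.card_pos.ne'

theorem bounded_order_of_nilpotent_bounded_exponent_general
    (k c e : ℕ) (he : 0 < e) :
    ∃ B : ℕ, ∀ (G : Type) [Group G],
      (∃ s : Finset G, s.card ≤ k ∧ Subgroup.closure (s : Set G) = ⊤) →
      (⊤ : Subgroup G).lowerCentralSeries c = ⊥ →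
      (∀ g : G, g ^ e = 1) →
      Finite G ∧ Nat.card G ≤ B :=
  ⟨nilpotentOrderBound k e c, fun _ _ ⟨_, hsk, hs⟩ hc hexp =>
    finite_and_card_le_nilpotentOrderBound he (Monoid.exponent_dvd_of_forall_pow_eq_one hexp)
      hs hsk hc⟩

/-- For all positive integers `k`, `c`, `e` there is a bound `B` such that every
`k`-generated group which is nilpotent of class at most `c` and has exponent dividing
`e` is finite of order at most `B`. -/
theorem bounded_order_of_nilpotent_bounded_exponent
    (k c e : ℕ) (hk : 0 < k) (hc : 0 < c) (he : 0 < e) :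
    ∃ B : ℕ, ∀ (G : Type) [Group G],
      (∃ s : Finset G, s.card ≤ k ∧ Subgroup.closure (s : Set G) = ⊤) →
      (⊤ : Subgroup G).lowerCentralSeries c = ⊥ →
      (∀ g : G, g ^ e = 1) →
      Finite G ∧ Nat.card G ≤ B :=
  bounded_order_of_nilpotent_bounded_exponent_general k c e he
end
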